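/- arXiv:2412.19095 — 2 statements merged into one kernel-verified Lean document; each statement's English description precedes it below -/
import Mathlib

section
/- The Laplacian spectrum of the fan graph F_{1,n} consists of 0 with multiplicity 1, n + 1 with multiplicity 1, and 3 - 2cos(πj/n) with multiplicity 1 for j = 1, ..., n-1. -/
open scoped Classical
open Polynomial

/-- The join `G + H` of two simple graphs. -/
def joinGraph {V W : Type*} (G : SimpleGraph V) (H : SimpleGraph W) : SimpleGraph (V ⊕ W) where
  Adj x y :=
    match x, y with
    | Sum.inl a, Sum.inl b => G.Adj a b
    | Sum.inr a, Sum.inr b => H.Adj a b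
    | _, _ => True
  symm := by
    constructor
    rintro (a | a) (b | b) h
    · exact G.adj_symm h
    · trivial
    · trivial
    · exact H.adj_symm h
  loopless := by
    constructor
    rintro (a | a) h
    · exact G.irrefl h
    · exact H.irrefl h

/-- The generalized fan graph `F_{m,n}`, the join of the empty graph on `m` vertices
with the path on `n` vertices. -/
def genFan (m n : ℕ) : SimpleGraph (Fin m ⊕ Fin n) :=
  joinGraph (⊥ : SimpleGraph (Fin m)) (SimpleGraph.pathGraph n)

open Polynomial Real

/-- telescoping sum of cosines -/
lemma tele_cos (φ : ℝ) (n : ℕ) :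
    ∑ k ∈ Finset.range n, 2 * Real.sin (φ/2) * Real.cos (φ * (k + 1/2)) = Real.sin (φ * n) := by
  have h : ∀ k : ℕ, 2 * Real.sin (φ/2) * Real.cos (φ * (k + 1/2))
      = Real.sin (φ * (k+1)) - Real.sin (φ * k) := by
    intro k
    rw [Real.sin_sub_sin]
    ring_nf
  simp_rw [h]
  have := Finset.sum_range_sub (f := fun k : ℕ => Real.sin (φ * k)) n
  push_cast at this ⊢
  rw [this]
  simp

lemma sumcos (n m : ℕ) (hn : 0 < n) (h1 : 0 < m) (h2 : m < 2 * n) :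
    ∑ k ∈ Finset.range n, Real.cos (Real.pi * m / n * (k + 1/2)) = 0 := by
  have hn' : (n:ℝ) ≠ 0 := by positivity
  have hs : Real.sin (Real.pi * m / n / 2) ≠ 0 := by
    apply ne_of_gt
    apply Real.sin_pos_of_pos_of_lt_pi
    · positivity
    · rw [div_lt_iff₀ (by norm_num), div_lt_iff₀ (by positivity)]
      have : (m:ℝ) < 2*n := by exact_mod_cast h2
      nlinarith [Real.pi_pos]
  have ht := tele_cos (Real.pi * m / n) n
  rw [← Finset.mul_sum] at ht
  have : Real.pi * m / n * n = m * Real.pi := by field_simp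
  rw [this, Real.sin_nat_mul_pi] at ht
  have := mul_eq_zero.mp ht
  rcases this with h | h
  · exact absurd h (by simpa using hs)
  · exact h

lemma cos_mul_cos (a b : ℝ) : Real.cos a * Real.cos b = (Real.cos (a - b) + Real.cos (a + b)) / 2 := by
  have h1 := Real.cos_add a b
  have h2 := Real.cos_sub a b
  linarith

lemma ortho_aux (n j l : ℕ) (hjl : j < l) (hl : l < n) :
    ∑ k ∈ Finset.range n, Real.cos (Real.pi * j / n * (k + 1/2)) * Real.cos (Real.pi * l / n * (k + 1/2)) = 0 := by
  have hn : 0 < n := Nat.lt_of_le_of_lt (Nat.zero_le l) hl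
  have key : ∀ k : ℕ, Real.cos (Real.pi * j / n * (k + 1/2)) * Real.cos (Real.pi * l / n * (k + 1/2))
      = (Real.cos (Real.pi * ((l - j : ℕ) : ℝ) / n * (k + 1/2))
        + Real.cos (Real.pi * ((j + l : ℕ) : ℝ) / n * (k + 1/2))) / 2 := by
    intro k
    have e1 : Real.pi * j / n * (k + 1/2) - Real.pi * l / n * (k + 1/2)
        = -(Real.pi * ((l - j : ℕ) : ℝ) / n * (k + 1/2)) := by
      push_cast [Nat.cast_sub hjl.le]; ring
    have e2 : Real.pi * j / n * (k + 1/2) + Real.pi * l / n * (k + 1/2)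
        = Real.pi * ((j + l : ℕ) : ℝ) / n * (k + 1/2) := by push_cast; ring
    rw [cos_mul_cos, e1, e2, Real.cos_neg]
  simp_rw [key]
  rw [← Finset.sum_div, Finset.sum_add_distrib,
    sumcos n (l - j) hn (by omega) (by omega), sumcos n (j + l) hn (by omega) (by omega)]
  norm_num

lemma ortho (n j l : ℕ) (hj : j < n) (hl : l < n) (hne : j ≠ l) :
    ∑ k ∈ Finset.range n, Real.cos (Real.pi * j / n * (k + 1/2)) * Real.cos (Real.pi * l / n * (k + 1/2)) = 0 := by
  rcases lt_or_gt_of_ne hne with h | h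
  · exact ortho_aux n j l h hl
  · simpa [mul_comm] using ortho_aux n l j h hj

lemma normsq (n j : ℕ) (hj1 : 1 ≤ j) (hj : j < n) :
    ∑ k ∈ Finset.range n, Real.cos (Real.pi * j / n * (k + 1/2)) ^ 2 = n / 2 := by
  have key : ∀ k : ℕ, Real.cos (Real.pi * j / n * (k + 1/2)) ^ 2
      = 1/2 + Real.cos (Real.pi * ((2 * j : ℕ) : ℝ) / n * (k + 1/2)) / 2 := by
    intro k
    rw [Real.cos_sq]
    congr 2
    push_cast; ring
  simp_rw [key]
  have h2 : ∑ x ∈ Finset.range n, Real.cos (Real.pi * ((2 * j : ℕ) : ℝ) / n * (x + 1/2)) / 2 = 0 := by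
    rw [← Finset.sum_div, sumcos n (2 * j) (by omega) (by omega) (by omega)]
    norm_num
  rw [Finset.sum_add_distrib, h2, add_zero, Finset.sum_const, Finset.card_range]
  simp
  ring


lemma cos_central (θ a : ℝ) :
    Real.cos (a - θ) + Real.cos (a + θ) = 2 * Real.cos θ * Real.cos a := by
  rw [Real.cos_add, Real.cos_sub]; ring

lemma cos_pi_refl (j : ℕ) (t : ℝ) : Real.cos ((j : ℝ) * Real.pi + t) = Real.cos ((j : ℝ) * Real.pi - t) := by
  rw [Real.cos_add, Real.cos_sub, Real.sin_nat_mul_pi]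
  ring

lemma path_eigen (n j k : ℕ) (hj1 : 1 ≤ j) (hj : j < n) (hk : k < n) :
    Real.cos (Real.pi * j / n * (k + 1/2))
      + ((if k + 1 < n then
            Real.cos (Real.pi * j / n * (k + 1/2))
              - Real.cos (Real.pi * j / n * (((k+1 : ℕ) : ℝ) + 1/2)) else 0)
        + (if 1 ≤ k then
            Real.cos (Real.pi * j / n * (k + 1/2))
              - Real.cos (Real.pi * j / n * (((k-1 : ℕ) : ℝ) + 1/2)) else 0))
    = (3 - 2 * Real.cos (Real.pi * j / n)) * Real.cos (Real.pi * j / n * (k + 1/2)) := by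
  have hn : (n : ℝ) ≠ 0 := Nat.cast_ne_zero.mpr (by omega)
  set θ := Real.pi * j / n with hθ
  have hc := cos_central θ (θ * (k + 1/2))
  have e1 : θ * (((k+1 : ℕ) : ℝ) + 1/2) = θ * (k + 1/2) + θ := by push_cast; ring
  by_cases h1 : 1 ≤ k
  · have e2 : θ * (((k-1 : ℕ) : ℝ) + 1/2) = θ * (k + 1/2) - θ := by
      push_cast [Nat.cast_sub h1]; ring
    by_cases h2 : k + 1 < n
    · rw [if_pos h2, if_pos h1, e1, e2]
      linarith
    · -- k = n - 1
      have hkn : k + 1 = n := by omega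
      rw [if_neg h2, if_pos h1, e2]
      have hπ : θ * n = (j : ℝ) * Real.pi := by rw [hθ, div_mul_cancel₀ _ hn]; ring
      have hkr : (k : ℝ) = (n : ℝ) - 1 := by
        have : (n : ℝ) = (k : ℝ) + 1 := by exact_mod_cast hkn.symm
        linarith
      have e3 : θ * (k + 1/2) + θ = (j : ℝ) * Real.pi + θ/2 := by rw [← hπ, hkr]; ring
      have e4 : θ * (k + 1/2) = (j : ℝ) * Real.pi - θ/2 := by rw [← hπ, hkr]; ring
      rw [e3, cos_pi_refl, ← e4] at hc
      linarith
  · -- k = 0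
    have hk0 : k = 0 := by omega
    have h2 : k + 1 < n := by omega
    rw [if_pos h2, if_neg h1, e1, hk0]
    have e5 : θ * ((0:ℕ) + 1/2) - θ = -(θ * ((0:ℕ) + 1/2)) := by push_cast; ring
    have hc0 := cos_central θ (θ * ((0:ℕ) + 1/2))
    rw [e5, Real.cos_neg] at hc0
    push_cast at hc0 ⊢
    linarith

open Matrix SimpleGraph in
lemma lap_row {V : Type*} [Fintype V] [DecidableEq V] (G : SimpleGraph V) [DecidableRel G.Adj]
    (i : V) (x : V → ℝ) :
    ∑ j, G.lapMatrix ℝ i j * x j = ∑ j, if G.Adj i j then x i - x j else 0 := by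
  have hdeg : (G.degree i : ℝ) * x i = ∑ j, if G.Adj i j then x i else 0 := by
    rw [G.degree_eq_sum_if_adj i, Finset.sum_mul]
    congr 1; ext j
    split <;> simp
  calc ∑ j, G.lapMatrix ℝ i j * x j
      = ∑ j, ((if i = j then (G.degree i : ℝ) else 0) * x j - (if G.Adj i j then 1 else 0) * x j) := by
        congr 1; ext j
        rw [lapMatrix, Matrix.sub_apply, degMatrix, Matrix.diagonal_apply, adjMatrix_apply, sub_mul]
    _ = (G.degree i : ℝ) * x i - ∑ j, if G.Adj i j then x j else 0 := by
        rw [Finset.sum_sub_distrib]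
        congr 1
        · simp [ite_mul]
        · congr 1; ext j; split <;> simp
    _ = ∑ j, if G.Adj i j then x i - x j else 0 := by
        rw [hdeg, ← Finset.sum_sub_distrib]
        congr 1; ext j
        split <;> simp

lemma sum_pathAdj (n : ℕ) (k : Fin n) (g : ℕ → ℝ) :
    ∑ l : Fin n, (if (SimpleGraph.pathGraph n).Adj k l then g l.val else 0)
      = (if k.val + 1 < n then g (k.val + 1) else 0)
        + (if 1 ≤ k.val then g (k.val - 1) else 0) := by
  have hsplit : ∀ l : Fin n, (if (SimpleGraph.pathGraph n).Adj k l then g l.val else 0)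
      = (if (k : ℕ) + 1 = l.val then g l.val else 0)
        + (if (l : ℕ) + 1 = k.val then g l.val else 0) := by
    intro l
    simp only [SimpleGraph.pathGraph_adj]
    by_cases h1 : (k : ℕ) + 1 = l.val <;> by_cases h2 : (l : ℕ) + 1 = k.val
    · omega
    · simp [h1, h2]
    · simp [h1, h2]
    · simp [h1, h2]
  simp_rw [hsplit]
  rw [Finset.sum_add_distrib]
  congr 1
  · by_cases h : k.val + 1 < n
    · rw [if_pos h, Finset.sum_eq_single (⟨k.val + 1, h⟩ : Fin n)]
      · simp
      · intro l _ hne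
        rw [if_neg]
        intro hc
        exact hne (Fin.ext hc.symm)
      · intro hm; exact absurd (Finset.mem_univ _) hm
    · rw [if_neg h]
      apply Finset.sum_eq_zero
      intro l _
      rw [if_neg]
      have := l.isLt
      omega
  · by_cases h : 1 ≤ k.val
    · have hlt : k.val - 1 < n := by have := k.isLt; omega
      rw [if_pos h, Finset.sum_eq_single (⟨k.val - 1, hlt⟩ : Fin n)]
      · simp; omega
      · intro l _ hne
        rw [if_neg]
        intro hc
        apply hne
        apply Fin.ext
        simp
        omega
      · intro hm; exact absurd (Finset.mem_univ _) hm
    · rw [if_neg h]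
      apply Finset.sum_eq_zero
      intro l _
      rw [if_neg]
      omega

noncomputable def fanP (n : ℕ) : Matrix (Fin 1 ⊕ Fin n) (Fin 1 ⊕ Fin n) ℝ :=
  Matrix.of fun i c =>
    Sum.elim (fun _ => (1 : ℝ))
      (fun j => if j.val = 0 then Sum.elim (fun _ => (n : ℝ)) (fun _ => -1) i
        else Sum.elim (fun _ => (0 : ℝ))
          (fun k => Real.cos (Real.pi * j.val / n * (k.val + 1/2))) i) c

noncomputable def fanD (n : ℕ) : (Fin 1 ⊕ Fin n) → ℝ :=
  Sum.elim (fun _ => 0)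
    (fun j => if j.val = 0 then (n : ℝ) + 1 else 3 - 2 * Real.cos (Real.pi * j.val / n))

noncomputable def fanC (n : ℕ) : (Fin 1 ⊕ Fin n) → ℝ :=
  Sum.elim (fun _ => (n : ℝ) + 1)
    (fun j => if j.val = 0 then (n : ℝ) ^ 2 + n else (n : ℝ) / 2)

lemma genFan_adj_lr {n : ℕ} (a : Fin 1) (l : Fin n) : (genFan 1 n).Adj (Sum.inl a) (Sum.inr l) := by
  trivial

lemma genFan_adj_rl {n : ℕ} (a : Fin 1) (l : Fin n) : (genFan 1 n).Adj (Sum.inr l) (Sum.inl a) := by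
  trivial

lemma genFan_adj_ll {n : ℕ} (a b : Fin 1) : ¬ (genFan 1 n).Adj (Sum.inl a) (Sum.inl b) := by
  simp [genFan, joinGraph]

lemma genFan_adj_rr {n : ℕ} (k l : Fin n) :
    (genFan 1 n).Adj (Sum.inr k) (Sum.inr l) ↔ (SimpleGraph.pathGraph n).Adj k l := Iff.rfl

lemma fanP_inl {n : ℕ} (i : Fin 1 ⊕ Fin n) (a : Fin 1) : fanP n i (Sum.inl a) = 1 := by
  cases i <;> rfl

lemma fanP_l_r0 {n : ℕ} (a : Fin 1) (j : Fin n) (hj : j.val = 0) :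
    fanP n (Sum.inl a) (Sum.inr j) = n := by simp [fanP, hj]

lemma fanP_r_r0 {n : ℕ} (k : Fin n) (j : Fin n) (hj : j.val = 0) :
    fanP n (Sum.inr k) (Sum.inr j) = -1 := by simp [fanP, hj]

lemma fanP_l_r1 {n : ℕ} (a : Fin 1) (j : Fin n) (hj : ¬ j.val = 0) :
    fanP n (Sum.inl a) (Sum.inr j) = 0 := by simp [fanP, hj]

lemma fanP_r_r1 {n : ℕ} (k : Fin n) (j : Fin n) (hj : ¬ j.val = 0) :
    fanP n (Sum.inr k) (Sum.inr j) = Real.cos (Real.pi * j.val / n * (k.val + 1/2)) := by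
  simp [fanP, hj]

lemma genFan_adj_rr' {n : ℕ} (k l : Fin n) :
    (genFan 1 n).Adj (Sum.inr k) (Sum.inr l) ↔ (SimpleGraph.pathGraph n).Adj k l := Iff.rfl

lemma fan_LP (n : ℕ) (hn : 1 ≤ n) :
    (genFan 1 n).lapMatrix ℝ * fanP n = fanP n * Matrix.diagonal (fanD n) := by
  have hsum : ∀ (j : ℕ), 1 ≤ j → j < n →
      ∑ l : Fin n, Real.cos (Real.pi * j / n * (l.val + 1/2)) = 0 := by
    intro j h1 h2
    rw [Fin.sum_univ_eq_sum_range (fun m => Real.cos (Real.pi * j / n * (m + 1/2)))]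
    exact sumcos n j hn h1 (by omega)
  ext i c
  rw [Matrix.mul_apply, Matrix.mul_diagonal, lap_row, Fintype.sum_sum_type]
  rcases c with a | j
  · -- all-ones column, eigenvalue 0
    simp [fanP_inl, fanD]
  · by_cases hj : j.val = 0
    · -- column (n, -1, ..., -1), eigenvalue n+1
      rcases i with a | k
      · simp only [fanP_l_r0 a j hj, fanP_r_r0 _ j hj, fanP_inl]
        simp [genFan_adj_ll, genFan_adj_lr, fanD, hj, Finset.sum_const, Finset.card_univ]
        push_cast; ring
      · simp only [fanP_r_r0 _ j hj, fanP_l_r0 _ j hj, fanP_inl, genFan_adj_rr']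
        simp [genFan_adj_rl, fanD, hj]
        push_cast; ring
    · -- column (0, v_j), eigenvalue 3 - 2cos(pi j / n)
      have hj1 : 1 ≤ j.val := by omega
      rcases i with a | k
      · simp only [fanP_l_r1 a j hj, fanP_r_r1 _ j hj, fanP_inl]
        simp [genFan_adj_ll, genFan_adj_lr, fanD, hj, zero_sub, Finset.sum_neg_distrib]
        simpa using hsum j.val hj1 j.isLt
      · simp only [fanP_r_r1 _ j hj, fanP_l_r1 _ j hj, fanP_inl, genFan_adj_rr',
          Fintype.sum_sum_type]
        have hone : ∀ w : Fin 1,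
            (if (genFan 1 n).Adj (Sum.inr k) (Sum.inl w) then
              Real.cos (Real.pi * j.val / n * (k.val + 1/2)) - 0 else 0)
            = Real.cos (Real.pi * j.val / n * (k.val + 1/2)) := by
          intro w
          rw [if_pos (genFan_adj_rl w k), sub_zero]
        rw [Finset.sum_congr rfl (fun w _ => hone w), Finset.sum_const, Finset.card_univ,
          sum_pathAdj n k (fun m => Real.cos (Real.pi * j.val / n * (k.val + 1/2))
            - Real.cos (Real.pi * j.val / n * (m + 1/2)))]
        simp only [fanD, Sum.elim_inr, hj, if_false, Fintype.card_fin, one_smul]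
        have he := path_eigen n j.val k.val hj1 j.isLt k.isLt
        rw [mul_comm]
        ring_nf at he ⊢
        linarith [he]

lemma fan_PTP (n : ℕ) (hn : 1 ≤ n) :
    (fanP n).transpose * fanP n = Matrix.diagonal (fanC n) := by
  have hsum : ∀ (j : ℕ), 1 ≤ j → j < n →
      ∑ l : Fin n, Real.cos (Real.pi * j / n * (l.val + 1/2)) = 0 := by
    intro j h1 h2
    rw [Fin.sum_univ_eq_sum_range (fun m => Real.cos (Real.pi * j / n * (m + 1/2)))]
    exact sumcos n j hn h1 (by omega)
  ext r s
  rw [Matrix.mul_apply]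
  simp only [Matrix.transpose_apply]
  rw [Fintype.sum_sum_type]
  rcases r with a | j <;> rcases s with b | l
  · have hab : a = b := Subsingleton.elim a b
    subst hab
    rw [Matrix.diagonal_apply_eq]
    simp [fanP_inl, fanC, Finset.card_univ]
    ring
  · rw [Matrix.diagonal_apply_ne _ (by simp)]
    by_cases hl : l.val = 0
    · simp only [fanP_inl, fanP_l_r0 _ l hl, fanP_r_r0 _ l hl, one_mul]
      simp
    · simp only [fanP_inl, fanP_l_r1 _ l hl, fanP_r_r1 _ l hl, one_mul]
      have hl1 : 1 ≤ l.val := by omega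
      simp
      simpa using hsum l.val hl1 l.isLt
  · rw [Matrix.diagonal_apply_ne _ (by simp)]
    by_cases hj : j.val = 0
    · simp only [fanP_inl, fanP_l_r0 _ j hj, fanP_r_r0 _ j hj, mul_one]
      simp
    · simp only [fanP_inl, fanP_l_r1 _ j hj, fanP_r_r1 _ j hj, mul_one]
      have hj1 : 1 ≤ j.val := by omega
      simp
      simpa using hsum j.val hj1 j.isLt
  · by_cases hj : j.val = 0 <;> by_cases hl : l.val = 0
    · have hjl : j = l := Fin.ext (by omega)
      subst hjl
      rw [Matrix.diagonal_apply_eq]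
      simp only [fanP_l_r0 _ j hj, fanP_r_r0 _ j hj, fanC, Sum.elim_inr, hj, if_pos]
      simp [Finset.card_univ]
      push_cast; ring
    · have hne : (Sum.inr j : Fin 1 ⊕ Fin n) ≠ Sum.inr l := by
        intro h; apply hl; rw [← Sum.inr_injective h]; exact hj
      rw [Matrix.diagonal_apply_ne _ hne]
      simp only [fanP_l_r0 _ j hj, fanP_r_r0 _ j hj, fanP_l_r1 _ l hl, fanP_r_r1 _ l hl]
      have hl1 : 1 ≤ l.val := by omega
      simp
      simpa using hsum l.val hl1 l.isLt
    · have hne : (Sum.inr j : Fin 1 ⊕ Fin n) ≠ Sum.inr l := by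
        intro h; apply hj; rw [Sum.inr_injective h]; exact hl
      rw [Matrix.diagonal_apply_ne _ hne]
      simp only [fanP_l_r0 _ l hl, fanP_r_r0 _ l hl, fanP_l_r1 _ j hj, fanP_r_r1 _ j hj]
      have hj1 : 1 ≤ j.val := by omega
      simp
      simpa using hsum j.val hj1 j.isLt
    · simp only [fanP_l_r1 _ j hj, fanP_r_r1 _ j hj, fanP_l_r1 _ l hl, fanP_r_r1 _ l hl]
      by_cases hjl : j = l
      · subst hjl
        rw [Matrix.diagonal_apply_eq]
        have := normsq n j.val (by omega) j.isLt
        rw [← Fin.sum_univ_eq_sum_range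
          (fun m => Real.cos (Real.pi * j.val / n * (m + 1/2)) ^ 2)] at this
        simp only [fanC, Sum.elim_inr, hj, if_false]
        rw [mul_zero, Finset.sum_const_zero, zero_add]
        simp only [pow_two] at this
        exact this
      · have hne : (Sum.inr j : Fin 1 ⊕ Fin n) ≠ Sum.inr l := fun h => hjl (Sum.inr_injective h)
        rw [Matrix.diagonal_apply_ne _ hne]
        have := ortho n j.val l.val j.isLt l.isLt (fun h => hjl (Fin.ext h))
        rw [← Fin.sum_univ_eq_sum_range (fun m => Real.cos (Real.pi * j.val / n * (m + 1/2))
          * Real.cos (Real.pi * l.val / n * (m + 1/2)))] at this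
        rw [mul_zero, Finset.sum_const_zero, zero_add]
        exact this
lemma fan_detP_ne (n : ℕ) (hn : 1 ≤ n) : (fanP n).det ≠ 0 := by
  have h := congrArg Matrix.det (fan_PTP n hn)
  rw [Matrix.det_mul, Matrix.det_transpose, Matrix.det_diagonal] at h
  have hn1 : (1 : ℝ) ≤ (n : ℝ) := by exact_mod_cast hn
  have hprod : ∏ i, fanC n i ≠ 0 := by
    apply Finset.prod_ne_zero_iff.mpr
    intro i _
    rcases i with a | j
    · simp only [fanC, Sum.elim_inl]
      positivity
    · simp only [fanC, Sum.elim_inr]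
      split
      · nlinarith
      · intro hc
        have : (n : ℝ) = 0 := by linarith [(div_eq_zero_iff.mp hc)]
        linarith
  intro h0
  rw [h0, mul_zero] at h
  exact hprod h.symm

lemma charpoly_diag_gen {m : Type*} [Fintype m] [DecidableEq m] (d : m → ℝ) :
    (Matrix.diagonal d).charpoly = ∏ i, (X - C (d i)) := by
  rw [Matrix.charpoly]
  have h : Matrix.charmatrix (Matrix.diagonal d)
      = Matrix.diagonal (fun i => (X : ℝ[X]) - C (d i)) := by
    refine Matrix.ext fun i k => ?_
    by_cases h : i = k
    · subst h
      rw [Matrix.charmatrix_apply_eq, Matrix.diagonal_apply_eq d i]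
      exact (Matrix.diagonal_apply_eq (fun i => (X : ℝ[X]) - C (d i)) i).symm
    · rw [Matrix.charmatrix_apply_ne _ _ _ h, Matrix.diagonal_apply_ne _ h,
        Matrix.diagonal_apply_ne _ h, map_zero, neg_zero]
  rw [h, Matrix.det_diagonal]

lemma fan_charpoly_eq (n : ℕ) (hn : 1 ≤ n) :
    ((genFan 1 n).lapMatrix ℝ).charpoly = ∏ i, (X - C (fanD n i)) := by
  have hdet := fan_detP_ne n hn
  have key : (Matrix.charmatrix ((genFan 1 n).lapMatrix ℝ)) * (fanP n).map C
      = (fanP n).map C * Matrix.charmatrix (Matrix.diagonal (fanD n)) := by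
    rw [Matrix.charmatrix, Matrix.charmatrix, sub_mul, mul_sub]
    simp only [RingHom.mapMatrix_apply]
    rw [← Matrix.map_mul, ← Matrix.map_mul, fan_LP n hn]
    congr 1
    exact (Matrix.scalar_commute (X : ℝ[X]) (fun r => (Commute.all _ r)) ((fanP n).map C)).eq
  have hd := congrArg Matrix.det key
  rw [Matrix.det_mul, Matrix.det_mul] at hd
  have hMap : ((fanP n).map (C : ℝ →+* ℝ[X])).det = C (fanP n).det :=
    (RingHom.map_det (C : ℝ →+* ℝ[X]) (fanP n)).symm
  rw [hMap] at hd
  have hC : (C (fanP n).det : ℝ[X]) ≠ 0 := by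
    simpa using hdet
  rw [← charpoly_diag_gen, Matrix.charpoly, Matrix.charpoly]
  rw [mul_comm ((C (fanP n).det : ℝ[X])) _] at hd
  exact mul_right_cancel₀ hC hd

/-- the Laplacian spectrum of the fan graph F_{1,n} consists of 0 (mult 1),
n+1 (mult 1), and 3-2cos(πj/n) (mult 1) for j = 1,…,n-1. -/
theorem lap_spectrum_fan (n : ℕ) (hn : 1 ≤ n) :
    ((genFan 1 n).lapMatrix ℝ).charpoly =
      X * (X - C ((n : ℝ) + 1)) *
        ∏ j ∈ Finset.Ico 1 n, (X - C (3 - 2 * Real.cos (Real.pi * j / n))) := by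
  rw [fan_charpoly_eq n hn, Fintype.prod_sum_type]
  have h1 : ∏ a : Fin 1, ((X : ℝ[X]) - C (fanD n (Sum.inl a))) = X := by
    simp [fanD]
  have h2 : ∏ j : Fin n, ((X : ℝ[X]) - C (fanD n (Sum.inr j)))
      = (X - C ((n : ℝ) + 1))
        * ∏ j ∈ Finset.Ico 1 n, (X - C (3 - 2 * Real.cos (Real.pi * j / n))) := by
    have hterm : ∀ j : Fin n, ((X : ℝ[X]) - C (fanD n (Sum.inr j)))
        = (fun m : ℕ => (X : ℝ[X])
            - C (if m = 0 then (n : ℝ) + 1 else 3 - 2 * Real.cos (Real.pi * m / n))) j.val := by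
      intro j
      simp only [fanD, Sum.elim_inr]
    rw [Finset.prod_congr rfl (fun j _ => hterm j),
      Fin.prod_univ_eq_prod_range (fun m => (X : ℝ[X])
        - C (if m = 0 then (n : ℝ) + 1 else 3 - 2 * Real.cos (Real.pi * m / n))) n,
      Finset.range_eq_Ico, Finset.prod_eq_prod_Ico_succ_bot hn]
    have h3 : ∏ x ∈ Finset.Ico 1 n, ((X : ℝ[X])
          - C (if x = 0 then (n : ℝ) + 1 else 3 - 2 * Real.cos (Real.pi * x / n)))
        = ∏ j ∈ Finset.Ico 1 n, ((X : ℝ[X]) - C (3 - 2 * Real.cos (Real.pi * j / n))) :=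
      Finset.prod_congr rfl (fun j hj => by
        rw [if_neg (by have := Finset.mem_Ico.mp hj; omega)])
    rw [h3]
    norm_num
  rw [h1, h2, mul_assoc]
end

section
/- Let G_1 and G_2 be graphs on n_1 and n_2 vertices with Laplacian eigenvalues 0 = λ_1 ≤ λ_2 ≤ ... ≤ λ_{n_1} and 0 = μ_1 ≤ μ_2 ≤ ... ≤ μ_{n_2} respectively. Then the distance Laplacian spectrum of the join G_1 + G_2 consists of: n_2 + 2n_1 - λ_i for 2 ≤ i ≤ n_1, n_1 + 2n_2 - μ_j for 2 ≤ j ≤ n_2, and the two eigenvalues 0 and n_1 + n_2, each with multiplicity 1. -/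
open scoped Classical
open Polynomial Matrix

/-- The distance Laplacian matrix `D^L(G) = Tr(G) - D(G)` of a graph. -/
noncomputable def distLap {V : Type*} [Fintype V] (G : SimpleGraph V) : Matrix V V ℝ :=
  Matrix.of fun i j => if i = j then ∑ k, (G.dist i k : ℝ) else -(G.dist i j : ℝ)


section distlemmas
variable {V W : Type*} (G : SimpleGraph V) (H : SimpleGraph W)

lemma joinGraph_adj_ll (i k : V) : (joinGraph G H).Adj (Sum.inl i) (Sum.inl k) ↔ G.Adj i k :=
  Iff.rfl

lemma joinGraph_adj_rr (i k : W) : (joinGraph G H).Adj (Sum.inr i) (Sum.inr k) ↔ H.Adj i k :=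
  Iff.rfl

lemma joinGraph_dist_lr (i : V) (k : W) :
    (joinGraph G H).dist (Sum.inl i) (Sum.inr k) = 1 :=
  SimpleGraph.dist_eq_one_iff_adj.mpr trivial

lemma joinGraph_dist_rl (i : W) (k : V) :
    (joinGraph G H).dist (Sum.inr i) (Sum.inl k) = 1 :=
  SimpleGraph.dist_eq_one_iff_adj.mpr trivial

lemma joinGraph_dist_ll [Nonempty W] (i k : V) :
    (joinGraph G H).dist (Sum.inl i) (Sum.inl k) =
      if i = k then 0 else if G.Adj i k then 1 else 2 := by
  split_ifs with h1 h2
  · subst h1; exact SimpleGraph.dist_self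
  · exact SimpleGraph.dist_eq_one_iff_adj.mpr h2
  · obtain ⟨w⟩ := ‹Nonempty W›
    have hadj1 : (joinGraph G H).Adj (Sum.inl i) (Sum.inr w) := trivial
    have hadj2 : (joinGraph G H).Adj (Sum.inr w) (Sum.inl k) := trivial
    let p : (joinGraph G H).Walk (Sum.inl i) (Sum.inl k) :=
      SimpleGraph.Walk.cons hadj1 (SimpleGraph.Walk.cons hadj2 SimpleGraph.Walk.nil)
    have hle : (joinGraph G H).dist (Sum.inl i) (Sum.inl k) ≤ 2 := by
      simpa [p] using SimpleGraph.dist_le p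
    have hne : (joinGraph G H).dist (Sum.inl i) (Sum.inl k) ≠ 0 := by
      rw [SimpleGraph.dist_ne_zero_iff_ne_and_reachable]
      exact ⟨by simp [h1], ⟨p⟩⟩
    have hne1 : (joinGraph G H).dist (Sum.inl i) (Sum.inl k) ≠ 1 := by
      rw [Ne, SimpleGraph.dist_eq_one_iff_adj]
      exact h2
    omega

lemma joinGraph_dist_rr [Nonempty V] (i k : W) :
    (joinGraph G H).dist (Sum.inr i) (Sum.inr k) =
      if i = k then 0 else if H.Adj i k then 1 else 2 := by
  split_ifs with h1 h2
  · subst h1; exact SimpleGraph.dist_self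
  · exact SimpleGraph.dist_eq_one_iff_adj.mpr h2
  · obtain ⟨w⟩ := ‹Nonempty V›
    have hadj1 : (joinGraph G H).Adj (Sum.inr i) (Sum.inl w) := trivial
    have hadj2 : (joinGraph G H).Adj (Sum.inl w) (Sum.inr k) := trivial
    let p : (joinGraph G H).Walk (Sum.inr i) (Sum.inr k) :=
      SimpleGraph.Walk.cons hadj1 (SimpleGraph.Walk.cons hadj2 SimpleGraph.Walk.nil)
    have hle : (joinGraph G H).dist (Sum.inr i) (Sum.inr k) ≤ 2 := by
      simpa [p] using SimpleGraph.dist_le p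
    have hne : (joinGraph G H).dist (Sum.inr i) (Sum.inr k) ≠ 0 := by
      rw [SimpleGraph.dist_ne_zero_iff_ne_and_reachable]
      exact ⟨by simp [h1], ⟨p⟩⟩
    have hne1 : (joinGraph G H).dist (Sum.inr i) (Sum.inr k) ≠ 1 := by
      rw [Ne, SimpleGraph.dist_eq_one_iff_adj]
      exact h2
    omega

end distlemmas

lemma eval_charpoly' {m : Type*} [Fintype m] [DecidableEq m] (M : Matrix m m ℝ) (x : ℝ) :
    (M.charpoly).eval x = (x • (1 : Matrix m m ℝ) - M).det := by
  rw [Matrix.charpoly, ← Polynomial.coe_evalRingHom, RingHom.map_det]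
  congr 1
  ext i j
  by_cases h : i = j
  · subst h; simp [Matrix.charmatrix_apply_eq, Matrix.one_apply]
  · simp [Matrix.charmatrix_apply_ne _ _ _ h, Matrix.one_apply, h]

lemma prod_neg_real {m : Type*} [Fintype m] (f : m → ℝ) :
    ∏ i, (-(f i)) = (-1) ^ Fintype.card m * ∏ i, f i := by
  rw [Finset.prod_congr rfl (fun i _ => show -f i = (-1) * f i by ring),
    Finset.prod_mul_distrib, Finset.prod_const]
  rfl

lemma univ_eq_insert_Ioi (n : ℕ) (hn : 0 < n) :
    (Finset.univ : Finset (Fin n)) = insert ⟨0, hn⟩ (Finset.Ioi ⟨0, hn⟩) := by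
  ext j
  simp only [Finset.mem_univ, Finset.mem_insert, Finset.mem_Ioi, true_iff, Fin.lt_def,
    Fin.ext_iff]
  omega

/-- if G₁, G₂ have Laplacian eigenvalues 0 = λ₁ ≤ … ≤ λ_{n₁} and
0 = μ₁ ≤ … ≤ μ_{n₂}, then the distance Laplacian spectrum of the join consists of
n₂+2n₁-λᵢ (2 ≤ i ≤ n₁), n₁+2n₂-μⱼ (2 ≤ j ≤ n₂), and 0 and n₁+n₂, each with multiplicity 1. -/
theorem distLap_spectrum_join (n₁ n₂ : ℕ) (hn₁ : 0 < n₁) (hn₂ : 0 < n₂)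
    (G₁ : SimpleGraph (Fin n₁)) (G₂ : SimpleGraph (Fin n₂))
    (lam : Fin n₁ → ℝ) (mu : Fin n₂ → ℝ)
    (hlam_mono : Monotone lam) (hmu_mono : Monotone mu)
    (hlam0 : lam ⟨0, hn₁⟩ = 0) (hmu0 : mu ⟨0, hn₂⟩ = 0)
    (hG₁ : (G₁.lapMatrix ℝ).charpoly = ∏ i, (X - C (lam i)))
    (hG₂ : (G₂.lapMatrix ℝ).charpoly = ∏ j, (X - C (mu j))) :
    (distLap (joinGraph G₁ G₂)).charpoly =
      X * (X - C ((n₁ : ℝ) + n₂)) *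
        (∏ i ∈ Finset.Ioi (⟨0, hn₁⟩ : Fin n₁), (X - C ((n₂ : ℝ) + 2 * n₁ - lam i))) *
        (∏ j ∈ Finset.Ioi (⟨0, hn₂⟩ : Fin n₂), (X - C ((n₁ : ℝ) + 2 * n₂ - mu j))) := by
  classical
  haveI : Nonempty (Fin n₁) := ⟨⟨0, hn₁⟩⟩
  haveI : Nonempty (Fin n₂) := ⟨⟨0, hn₂⟩⟩
  set a : ℝ := (n₂ : ℝ) + 2 * n₁ with ha
  set b : ℝ := (n₁ : ℝ) + 2 * n₂ with hb
  set L₁ := G₁.lapMatrix ℝ with hL₁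
  set L₂ := G₂.lapMatrix ℝ with hL₂
  -- entries of the Laplacians
  have hL1diag : ∀ i, L₁ i i = (G₁.degree i : ℝ) := by
    intro i
    simp [hL₁, SimpleGraph.lapMatrix, SimpleGraph.degMatrix, Matrix.sub_apply]
  have hL2diag : ∀ i, L₂ i i = (G₂.degree i : ℝ) := by
    intro i
    simp [hL₂, SimpleGraph.lapMatrix, SimpleGraph.degMatrix, Matrix.sub_apply]
  have hL1off : ∀ i k, i ≠ k → L₁ i k = -(if G₁.Adj i k then (1:ℝ) else 0) := by
    intro i k h
    simp [hL₁, SimpleGraph.lapMatrix, SimpleGraph.degMatrix, Matrix.sub_apply,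
      Matrix.diagonal_apply_ne _ h]
  have hL2off : ∀ i k, i ≠ k → L₂ i k = -(if G₂.Adj i k then (1:ℝ) else 0) := by
    intro i k h
    simp [hL₂, SimpleGraph.lapMatrix, SimpleGraph.degMatrix, Matrix.sub_apply,
      Matrix.diagonal_apply_ne _ h]
  have hrow1 : ∀ i, ∑ k, L₁ i k = 0 := by
    intro i
    have := congrFun (G₁.lapMatrix_mulVec_const_eq_zero (R := ℝ)) i
    simpa [Matrix.mulVec, dotProduct] using this
  have hrow2 : ∀ i, ∑ k, L₂ i k = 0 := by
    intro i
    have := congrFun (G₂.lapMatrix_mulVec_const_eq_zero (R := ℝ)) i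
    simpa [Matrix.mulVec, dotProduct] using this
  -- distances in the join
  have hdll : ∀ i k : Fin n₁, ((joinGraph G₁ G₂).dist (Sum.inl i) (Sum.inl k) : ℝ)
      = (if i = k then 0 else 2) - (if G₁.Adj i k then 1 else 0) := by
    intro i k
    rw [joinGraph_dist_ll]
    split_ifs with h1 h2 <;> first
      | (exact absurd h2 (by subst h1; exact G₁.irrefl))
      | norm_num
  have hdrr : ∀ i k : Fin n₂, ((joinGraph G₁ G₂).dist (Sum.inr i) (Sum.inr k) : ℝ)
      = (if i = k then 0 else 2) - (if G₂.Adj i k then 1 else 0) := by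
    intro i k
    rw [joinGraph_dist_rr]
    split_ifs with h1 h2 <;> first
      | (exact absurd h2 (by subst h1; exact G₂.irrefl))
      | norm_num
  -- transmissions
  have hTr1 : ∀ i : Fin n₁, ∑ m, ((joinGraph G₁ G₂).dist (Sum.inl i) m : ℝ)
      = a - 2 - L₁ i i := by
    intro i
    rw [Fintype.sum_sum_type]
    have h2 : ∑ k : Fin n₂, ((joinGraph G₁ G₂).dist (Sum.inl i) (Sum.inr k) : ℝ) = n₂ := by
      simp [joinGraph_dist_lr]
    have h1 : ∑ k : Fin n₁, ((joinGraph G₁ G₂).dist (Sum.inl i) (Sum.inl k) : ℝ)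
        = (2 * n₁ - 2) - (G₁.degree i : ℝ) := by
      rw [Finset.sum_congr rfl (fun k _ => hdll i k), Finset.sum_sub_distrib,
        ← G₁.degree_eq_sum_if_adj i]
      congr 1
      rw [Finset.sum_congr rfl (fun k _ =>
        show (if i = k then (0:ℝ) else 2) = 2 - (if i = k then 2 else 0) by split_ifs <;> ring),
        Finset.sum_sub_distrib, Finset.sum_const, Finset.sum_ite_eq]
      simp [mul_comm]
    rw [h1, h2, hL1diag i, ha]
    ring
  have hTr2 : ∀ i : Fin n₂, ∑ m, ((joinGraph G₁ G₂).dist (Sum.inr i) m : ℝ)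
      = b - 2 - L₂ i i := by
    intro i
    rw [Fintype.sum_sum_type]
    have h2 : ∑ k : Fin n₁, ((joinGraph G₁ G₂).dist (Sum.inr i) (Sum.inl k) : ℝ) = n₁ := by
      simp [joinGraph_dist_rl]
    have h1 : ∑ k : Fin n₂, ((joinGraph G₁ G₂).dist (Sum.inr i) (Sum.inr k) : ℝ)
        = (2 * n₂ - 2) - (G₂.degree i : ℝ) := by
      rw [Finset.sum_congr rfl (fun k _ => hdrr i k), Finset.sum_sub_distrib,
        ← G₂.degree_eq_sum_if_adj i]
      congr 1
      rw [Finset.sum_congr rfl (fun k _ =>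
        show (if i = k then (0:ℝ) else 2) = 2 - (if i = k then 2 else 0) by split_ifs <;> ring),
        Finset.sum_sub_distrib, Finset.sum_const, Finset.sum_ite_eq]
      simp [mul_comm]
    rw [h1, h2, hL2diag i, hb]
    ring
  apply Polynomial.eq_of_infinite_eval_eq
  apply Set.Infinite.mono (s := ({a, b} : Set ℝ)ᶜ)
  swap
  · exact (Set.toFinite ({a, b} : Set ℝ)).infinite_compl
  intro x hx
  simp only [Set.mem_compl_iff, Set.mem_insert_iff, Set.mem_singleton_iff, not_or] at hx
  obtain ⟨hxa, hxb⟩ := hx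
  have hxa' : x - a ≠ 0 := sub_ne_zero.mpr hxa
  have hxb' : x - b ≠ 0 := sub_ne_zero.mpr hxb
  simp only [Set.mem_setOf_eq]
  rw [eval_charpoly']
  set U : Matrix (Fin n₁ ⊕ Fin n₂) (Fin 2) ℝ :=
    Matrix.of (Sum.elim (fun _ => ![1, 0]) (fun _ => ![0, 1])) with hU
  set S : Matrix (Fin 2) (Fin 2) ℝ := !![2, 1; 1, 2] with hS
  set Dm : Matrix (Fin 2) (Fin 2) ℝ := !![(x - a)⁻¹, 0; 0, (x - b)⁻¹] with hDm
  set Δ : Matrix (Fin 2) (Fin 2) ℝ := !![x - a, 0; 0, x - b] with hΔ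
  set M : Matrix (Fin n₁ ⊕ Fin n₂) (Fin n₁ ⊕ Fin n₂) ℝ :=
    Matrix.fromBlocks ((x - a) • 1 + L₁) 0 0 ((x - b) • 1 + L₂) with hM
  -- Step A : x • 1 - distLap = M + U * S * Uᵀ
  have hA : x • (1 : Matrix (Fin n₁ ⊕ Fin n₂) (Fin n₁ ⊕ Fin n₂) ℝ)
      - distLap (joinGraph G₁ G₂) = M + U * S * Uᵀ := by
    ext s t
    have hUS : ∀ s t, (U * S * Uᵀ) s t = (2 : ℝ) - (if (s.isLeft ∧ t.isRight) ∨ (s.isRight ∧ t.isLeft) then 1 else 0) := by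
      intro s t
      rcases s with i | i <;> rcases t with k | k <;>
        simp [Matrix.mul_apply, Fin.sum_univ_two, hU, hS] <;> norm_num
    rw [Matrix.sub_apply, Matrix.add_apply, hUS s t]
    rcases s with i | i <;> rcases t with k | k
    · by_cases hik : i = k
      · subst hik
        simp only [Matrix.sub_apply, Matrix.smul_apply, Matrix.one_apply_eq, smul_eq_mul,
          Matrix.add_apply, hM, Matrix.fromBlocks_apply₁₁, distLap, Matrix.of_apply,
          if_pos rfl, Sum.isLeft_inl, Sum.isRight_inl, Matrix.one_apply_eq]
        rw [hTr1 i]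
        simp
        ring
      · have hik' : (Sum.inl i : Fin n₁ ⊕ Fin n₂) ≠ Sum.inl k := by simp [hik]
        simp only [Matrix.sub_apply, Matrix.smul_apply, Matrix.one_apply_ne hik', smul_eq_mul,
          Matrix.add_apply, hM, Matrix.fromBlocks_apply₁₁, distLap, Matrix.of_apply,
          if_neg hik', Sum.isLeft_inl, Sum.isRight_inl, Matrix.one_apply_ne hik]
        rw [hdll i k, hL1off i k hik, if_neg hik]
        simp
        ring
    · simp only [Matrix.sub_apply, Matrix.smul_apply, smul_eq_mul, Matrix.add_apply, hM,
        Matrix.fromBlocks_apply₁₂, distLap, Matrix.of_apply, Sum.isLeft_inl, Sum.isRight_inr,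
        Matrix.one_apply_ne (show (Sum.inl i : Fin n₁ ⊕ Fin n₂) ≠ Sum.inr k by simp),
        if_neg (show (Sum.inl i : Fin n₁ ⊕ Fin n₂) ≠ Sum.inr k by simp)]
      rw [joinGraph_dist_lr]
      norm_num
    · simp only [Matrix.sub_apply, Matrix.smul_apply, smul_eq_mul, Matrix.add_apply, hM,
        Matrix.fromBlocks_apply₂₁, distLap, Matrix.of_apply, Sum.isLeft_inr, Sum.isRight_inl,
        Matrix.one_apply_ne (show (Sum.inr i : Fin n₁ ⊕ Fin n₂) ≠ Sum.inl k by simp),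
        if_neg (show (Sum.inr i : Fin n₁ ⊕ Fin n₂) ≠ Sum.inl k by simp)]
      rw [joinGraph_dist_rl]
      norm_num
    · by_cases hik : i = k
      · subst hik
        simp only [Matrix.sub_apply, Matrix.smul_apply, Matrix.one_apply_eq, smul_eq_mul,
          Matrix.add_apply, hM, Matrix.fromBlocks_apply₂₂, distLap, Matrix.of_apply,
          if_pos rfl, Sum.isLeft_inr, Sum.isRight_inr]
        rw [hTr2 i]
        simp
        ring
      · have hik' : (Sum.inr i : Fin n₁ ⊕ Fin n₂) ≠ Sum.inr k := by simp [hik]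
        simp only [Matrix.sub_apply, Matrix.smul_apply, Matrix.one_apply_ne hik', smul_eq_mul,
          Matrix.add_apply, hM, Matrix.fromBlocks_apply₂₂, distLap, Matrix.of_apply,
          if_neg hik', Sum.isLeft_inr, Sum.isRight_inr, Matrix.one_apply_ne hik]
        rw [hdrr i k, hL2off i k hik, if_neg hik]
        simp
        ring
  -- Step B : M * U = U * Δ
  have hB : M * U = U * Δ := by
    ext s t
    rcases s with i | i <;> fin_cases t <;>
      simp [Matrix.mul_apply, Fintype.sum_sum_type, Fin.sum_univ_two, hU, hS, hM, hΔ,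
        Matrix.fromBlocks_apply₁₁, Matrix.fromBlocks_apply₁₂, Matrix.fromBlocks_apply₂₁,
        Matrix.fromBlocks_apply₂₂, Matrix.add_apply, Matrix.smul_apply, Matrix.one_apply,
        Finset.sum_add_distrib, hrow1, hrow2, Finset.sum_ite_eq, mul_ite]
  -- determinant chain
  have hΔD : Δ * Dm = 1 := by
    rw [hΔ, hDm]
    rw [show (1 : Matrix (Fin 2) (Fin 2) ℝ) = !![1,0;0,1] by rw [Matrix.one_fin_two]]
    rw [Matrix.mul_fin_two]
    congr 1 <;> field_simp <;> simp
  have hfact : M + U * S * Uᵀ = M * (1 + U * (Dm * S * Uᵀ)) := by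
    rw [Matrix.mul_add, Matrix.mul_one, ← Matrix.mul_assoc M U, hB]
    congr 1
    symm
    calc U * Δ * (Dm * S * Uᵀ) = U * ((Δ * Dm) * (S * Uᵀ)) := by
          simp only [Matrix.mul_assoc]
      _ = U * S * Uᵀ := by rw [hΔD, Matrix.one_mul, Matrix.mul_assoc]
  have hUtU : Uᵀ * U = !![(n₁ : ℝ), 0; 0, (n₂ : ℝ)] := by
    ext t t'
    fin_cases t <;> fin_cases t' <;>
      simp [Matrix.mul_apply, Fintype.sum_sum_type, hU, Finset.sum_const]
  have hdet2 : (1 + Dm * S * Uᵀ * U).det = x * (x - ((n₁:ℝ) + n₂)) / ((x - a) * (x - b)) := by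
    rw [Matrix.mul_assoc (Dm * S), hUtU, hDm, hS]
    rw [Matrix.det_fin_two]
    simp [Matrix.mul_apply, Fin.sum_univ_two, Matrix.one_apply, Matrix.add_apply]
    field_simp
    ring
  have hdetB1 : ((x - a) • (1 : Matrix (Fin n₁) (Fin n₁) ℝ) + L₁).det
      = ∏ i, (x - (a - lam i)) := by
    have h1 : (x - a) • (1 : Matrix (Fin n₁) (Fin n₁) ℝ) + L₁
        = -((a - x) • (1 : Matrix (Fin n₁) (Fin n₁) ℝ) - L₁) := by
      ext i k
      simp only [Matrix.add_apply, Matrix.neg_apply, Matrix.sub_apply, Matrix.smul_apply,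
        Matrix.one_apply, smul_eq_mul]
      split_ifs <;> ring
    rw [h1, Matrix.det_neg, ← eval_charpoly', hG₁]
    simp only [eval_prod, eval_sub, eval_X, eval_C]
    rw [Finset.prod_congr rfl (fun i _ => show x - (a - lam i) = -((a - x) - lam i) by ring),
      prod_neg_real]
  have hdetB2 : ((x - b) • (1 : Matrix (Fin n₂) (Fin n₂) ℝ) + L₂).det
      = ∏ j, (x - (b - mu j)) := by
    have h1 : (x - b) • (1 : Matrix (Fin n₂) (Fin n₂) ℝ) + L₂
        = -((b - x) • (1 : Matrix (Fin n₂) (Fin n₂) ℝ) - L₂) := by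
      ext i k
      simp only [Matrix.add_apply, Matrix.neg_apply, Matrix.sub_apply, Matrix.smul_apply,
        Matrix.one_apply, smul_eq_mul]
      split_ifs <;> ring
    rw [h1, Matrix.det_neg, ← eval_charpoly', hG₂]
    simp only [eval_prod, eval_sub, eval_X, eval_C]
    rw [Finset.prod_congr rfl (fun j _ => show x - (b - mu j) = -((b - x) - mu j) by ring),
      prod_neg_real]
  have hdetM : M.det = (∏ i, (x - (a - lam i))) * (∏ j, (x - (b - mu j))) := by
    rw [hM, Matrix.det_fromBlocks_zero₂₁, hdetB1, hdetB2]
  -- put everything together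
  have hdetLHS : (x • (1 : Matrix (Fin n₁ ⊕ Fin n₂) (Fin n₁ ⊕ Fin n₂) ℝ)
      - distLap (joinGraph G₁ G₂)).det
      = (∏ i, (x - (a - lam i))) * (∏ j, (x - (b - mu j)))
        * (x * (x - ((n₁:ℝ) + n₂)) / ((x - a) * (x - b))) := by
    rw [hA, hfact, Matrix.det_mul, Matrix.det_one_add_mul_comm, hdet2, hdetM]
  rw [hdetLHS]
  -- evaluate the RHS polynomial
  have hprod1 : (∏ i, (x - (a - lam i)))
      = (x - a) * ∏ i ∈ Finset.Ioi (⟨0, hn₁⟩ : Fin n₁), (x - (a - lam i)) := by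
    rw [univ_eq_insert_Ioi n₁ hn₁, Finset.prod_insert (by simp), hlam0, sub_zero]
  have hprod2 : (∏ j, (x - (b - mu j)))
      = (x - b) * ∏ j ∈ Finset.Ioi (⟨0, hn₂⟩ : Fin n₂), (x - (b - mu j)) := by
    rw [univ_eq_insert_Ioi n₂ hn₂, Finset.prod_insert (by simp), hmu0, sub_zero]
  rw [hprod1, hprod2]
  simp only [eval_mul, eval_prod, eval_sub, eval_X, eval_C, eval_mul]
  have e1 : ∀ i : Fin n₁, x - ((n₂:ℝ) + 2 * n₁ - lam i) = x - (a - lam i) := fun i => by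
    rw [ha]
  have e2 : ∀ j : Fin n₂, x - ((n₁:ℝ) + 2 * n₂ - mu j) = x - (b - mu j) := fun j => by
    rw [hb]
  rw [Finset.prod_congr rfl (fun i _ => e1 i), Finset.prod_congr rfl (fun j _ => e2 j)]
  field_simp
end
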